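/- arXiv:1710.00383 — 6 statements merged into one kernel-verified Lean document; each statement's English description precedes it below -/
import Mathlib

section
/- For any finite simple graph G of order n and any proper vertex colouring c of G using exactly χ(G) colours, the number of vertices yielding a rainbow neighbourhood with respect to c satisfies χ(G) ≤ r_χ(G,c) ≤ n. In particular, for every colour class of c there is at least one vertex of that colour whose closed neighbourhood meets all colour classes. -/
open SimpleGraph

/-- A vertex `v` yields a rainbow neighbourhood w.r.t. the colouring `c` if its closed
neighbourhood `N[v]` contains a vertex of every colour class. -/
def yieldsRainbow {V : Type*} {k : ℕ} (G : SimpleGraph V) (c : G.Coloring (Fin k)) (v : V) :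
    Prop :=
  ∀ i : Fin k, ∃ u : V, (u = v ∨ G.Adj v u) ∧ c u = i

/-- The number of vertices yielding a rainbow neighbourhood w.r.t. `c`. -/
noncomputable def rainbowCount {V : Type*} [Fintype V] {k : ℕ} (G : SimpleGraph V)
    (c : G.Coloring (Fin k)) : ℕ :=
  Nat.card {v : V // yieldsRainbow G c v}

lemma exists_rainbow_in_class {V : Type*} [Fintype V] (G : SimpleGraph V) (m : ℕ)
    (hk : G.chromaticNumber = (m + 1 : ℕ)) (c : G.Coloring (Fin (m + 1))) (i : Fin (m + 1)) :
    ∃ v : V, c v = i ∧ yieldsRainbow G c v := by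
  classical
  by_contra h
  push_neg at h
  -- for each v of colour i, a missing colour in N[v]
  have hmiss : ∀ v : V, c v = i → ∃ j : Fin (m + 1),
      ∀ u : V, (u = v ∨ G.Adj v u) → c u ≠ j := by
    intro v hv
    have := h v hv
    unfold yieldsRainbow at this
    push_neg at this
    obtain ⟨j, hj⟩ := this
    exact ⟨j, fun u hu => hj u hu⟩
  choose j hj using hmiss
  -- recoloured function
  set f : V → Fin (m + 1) := fun v => if hv : c v = i then j v hv else c v with hf
  have hfne : ∀ v, f v ≠ i := by
    intro v
    by_cases hv : c v = i
    · simp only [hf, dif_pos hv]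
      intro hji
      exact (hj v hv v (Or.inl rfl)) (hv.trans hji.symm)
    · simp only [hf, dif_neg hv]; exact hv
  have hproper : ∀ {u v : V}, G.Adj u v → f u ≠ f v := by
    intro u v huv
    by_cases hu : c u = i <;> by_cases hv : c v = i
    · exact absurd (hu.trans hv.symm) (c.valid huv)
    · simp only [hf, dif_pos hu, dif_neg hv]
      intro hh
      exact hj u hu v (Or.inr huv) hh.symm
    · simp only [hf, dif_neg hu, dif_pos hv]
      intro hh
      exact hj v hv u (Or.inr huv.symm) hh
    · simp only [hf, dif_neg hu, dif_neg hv]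
      exact c.valid huv
  -- colouring into the complement of i
  let d : G.Coloring {x : Fin (m + 1) // x ≠ i} :=
    SimpleGraph.Coloring.mk (fun v => ⟨f v, hfne v⟩)
      (fun {u v} huv => by simpa [Subtype.ext_iff] using hproper huv)
  have hcard : Fintype.card {x : Fin (m + 1) // x ≠ i} = m := by
    simp [Fintype.card_subtype_compl]
  have hcol : G.Colorable m := hcard ▸ d.colorable
  have hle : G.chromaticNumber ≤ (m : ℕ∞) := hcol.chromaticNumber_le
  rw [hk] at hle
  exact absurd hle (by exact_mod_cast Nat.not_succ_le_self m)

/-- For any graph `G` of order `n` and any proper colouring `c` of `G`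
with exactly `χ(G)` colours, `χ(G) ≤ r_χ(G,c) ≤ n`; in particular every colour class
contains a vertex yielding a rainbow neighbourhood. -/
theorem rainbowCount_bounds {V : Type*} [Fintype V] (G : SimpleGraph V) (k : ℕ)
    (hk : G.chromaticNumber = k) (c : G.Coloring (Fin k)) :
    k ≤ rainbowCount G c ∧ rainbowCount G c ≤ Fintype.card V ∧
      ∀ i : Fin k, ∃ v : V, c v = i ∧ yieldsRainbow G c v := by
  classical
  have key : ∀ i : Fin k, ∃ v : V, c v = i ∧ yieldsRainbow G c v := by
    intro i
    obtain ⟨m, rfl⟩ : ∃ m, k = m + 1 := ⟨k - 1, by have : k ≠ 0 := fun h => (h ▸ i).elim0; omega⟩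
    exact exists_rainbow_in_class G m hk c i
  refine ⟨?_, ?_, key⟩
  · choose g hg1 hg2 using key
    have hinj : Function.Injective (fun i => (⟨g i, hg2 i⟩ : {v : V // yieldsRainbow G c v})) := by
      intro a b hab
      have : g a = g b := congrArg Subtype.val hab
      rw [← hg1 a, ← hg1 b, this]
    calc k = Nat.card (Fin k) := by simp
      _ ≤ rainbowCount G c := Nat.card_le_card_of_injective _ hinj
  · calc rainbowCount G c ≤ Nat.card V := Nat.card_le_card_of_injective Subtype.val Subtype.val_injective
      _ = Fintype.card V := Nat.card_eq_fintype_card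
end

section
/- Let G be a finite simple graph and let G' = K₁ + G be the join of a single new vertex with G, i.e. G' is obtained from G by adding one new vertex adjacent to every vertex of G. Then χ(G') = χ(G) + 1 and r^-_χ(G') = 1 + r^-_χ(G), where r^-_χ denotes the minimum, over all proper colourings using exactly the chromatic number of colours, of the number of vertices yielding a rainbow neighbourhood. -/
open SimpleGraph

/-- The minimum number of vertices yielding a rainbow neighbourhood, over all proper
colourings with exactly `k` colours. -/
noncomputable def rMin {V : Type*} [Fintype V] (G : SimpleGraph V) (k : ℕ) : ℕ :=
  sInf (Set.range fun c : G.Coloring (Fin k) => rainbowCount G c)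

/-- The maximum number of vertices yielding a rainbow neighbourhood, over all proper
colourings with exactly `k` colours. -/
noncomputable def rMax {V : Type*} [Fintype V] (G : SimpleGraph V) (k : ℕ) : ℕ :=
  sSup (Set.range fun c : G.Coloring (Fin k) => rainbowCount G c)


/-- The join `K₁ + G`: a new vertex (`none`) adjacent to every vertex of `G`. -/
def joinK1 {V : Type*} (G : SimpleGraph V) : SimpleGraph (Option V) where
  Adj x y :=
    match x, y with
    | none, none => False
    | none, some _ => True
    | some _, none => True
    | some a, some b => G.Adj a b
  symm := by
    constructor
    rintro (_ | a) (_ | b) h <;> simp_all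
    exact G.adj_symm h
  loopless := by
    constructor
    rintro (_ | a) h <;> simp_all

/-! Permuting colours so that the apex `none` gets the last colour, every `(k+1)`-colouring of
`K₁ + G` becomes the extension of a `k`-colouring `c` of `G` by a fresh colour on the apex. When
`k = χ(G)` every `k`-colouring of `G` uses all colours, hence so does every `(k+1)`-colouring of
`K₁ + G`, which gives `χ(K₁ + G) = k + 1`. The apex, adjacent to everything, is then always
rainbow, and a vertex of `G` is rainbow for the extension iff it is rainbow for `c`; since
recolouring does not change rainbow counts, the counts of `K₁ + G` are exactly those of `G`
shifted by one. -/

open Function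

theorem Nat.card_subtype_option {V : Type*} [Finite V] {P : Option V → Prop} (hnone : P none) :
    Nat.card {x // P x} = 1 + Nat.card {v // P (some v)} := by
  have hset : {x | P x} = insert none (some '' {v | P (some v)}) := by
    ext (_ | v) <;> simp [hnone]
  change Nat.card ({x | P x} : Set _) = 1 + Nat.card ({v | P (some v)} : Set V)
  rw [Nat.card_coe_set_eq, Nat.card_coe_set_eq, hset, Set.ncard_insert_of_notMem (by simp),
    Set.ncard_image_of_injective _ (Option.some_injective V), add_comm]

section Rainbow

variable {V : Type*} {k : ℕ} (G : SimpleGraph V)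

theorem yieldsRainbow_recolorOfEquiv (e : Fin k ≃ Fin k) (c : G.Coloring (Fin k)) (v : V) :
    yieldsRainbow G (G.recolorOfEquiv e c) v ↔ yieldsRainbow G c v := by
  refine ⟨fun h i => ?_, fun h i => ?_⟩
  · obtain ⟨u, hu, hcu⟩ := h (e i)
    exact ⟨u, hu, e.injective hcu⟩
  · obtain ⟨u, hu, hcu⟩ := h (e.symm i)
    exact ⟨u, hu, by simp [hcu]⟩

theorem rainbowCount_recolorOfEquiv [Fintype V] (e : Fin k ≃ Fin k) (c : G.Coloring (Fin k)) :
    rainbowCount G (G.recolorOfEquiv e c) = rainbowCount G c :=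
  Nat.card_congr (Equiv.subtypeEquivRight (yieldsRainbow_recolorOfEquiv G e c))

variable {G}

theorem yieldsRainbow_of_forall_adj {c : G.Coloring (Fin k)} (hc : Surjective c) {v : V}
    (hv : ∀ u, u ≠ v → G.Adj v u) : yieldsRainbow G c v := fun i =>
  let ⟨u, hu⟩ := hc i
  ⟨u, (eq_or_ne u v).imp_right (hv u), hu⟩

end Rainbow

section JoinK1

variable {V : Type*} {G : SimpleGraph V} {k : ℕ}

@[simp]
theorem joinK1_adj_none_some (v : V) : (joinK1 G).Adj none (some v) := trivial

@[simp]
theorem joinK1_adj_some_some {v w : V} : (joinK1 G).Adj (some v) (some w) ↔ G.Adj v w := Iff.rfl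

namespace SimpleGraph.Coloring

def joinK1Extend (c : G.Coloring (Fin k)) : (joinK1 G).Coloring (Fin (k + 1)) :=
  Coloring.mk (fun x => x.elim (Fin.last k) fun v => (c v).castSucc) <| by
    rintro (_ | v) (_ | w) hadj
    · exact hadj.elim
    · exact (Fin.castSucc_lt_last (c w)).ne'
    · exact (Fin.castSucc_lt_last (c v)).ne
    · exact fun h => c.valid hadj (Fin.castSucc_inj.mp h)

@[simp]
theorem joinK1Extend_none (c : G.Coloring (Fin k)) : c.joinK1Extend none = Fin.last k := rfl

@[simp]
theorem joinK1Extend_some (c : G.Coloring (Fin k)) (v : V) :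
    c.joinK1Extend (some v) = (c v).castSucc := rfl

def joinK1Restrict (d : (joinK1 G).Coloring (Fin (k + 1))) (hd : d none = Fin.last k) :
    G.Coloring (Fin k) :=
  Coloring.mk (fun v => (d (some v)).castPred (hd ▸ d.valid (joinK1_adj_none_some v).symm))
    fun hadj h => d.valid (joinK1_adj_some_some.mpr hadj) (Fin.castPred_inj.mp h)

theorem joinK1Extend_joinK1Restrict (d : (joinK1 G).Coloring (Fin (k + 1)))
    (hd : d none = Fin.last k) : (d.joinK1Restrict hd).joinK1Extend = d := by
  ext (_ | v) : 1
  · exact hd.symm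
  · rfl

theorem exists_recolorOfEquiv_eq_joinK1Extend (d : (joinK1 G).Coloring (Fin (k + 1))) :
    ∃ (e : Fin (k + 1) ≃ Fin (k + 1)) (c : G.Coloring (Fin k)),
      (joinK1 G).recolorOfEquiv e d = c.joinK1Extend := by
  have hlast : (joinK1 G).recolorOfEquiv (Equiv.swap (d none) (Fin.last k)) d none = Fin.last k :=
    Equiv.swap_apply_left _ _
  exact ⟨_, _, (joinK1Extend_joinK1Restrict _ hlast).symm⟩

theorem joinK1Extend_surjective {c : G.Coloring (Fin k)} (hc : Surjective c) :
    Surjective c.joinK1Extend := fun i =>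
  Fin.lastCases ⟨none, rfl⟩ (fun j => let ⟨v, hv⟩ := hc j; ⟨some v, by simp [hv]⟩) i

theorem yieldsRainbow_joinK1Extend_some (c : G.Coloring (Fin k)) (v : V) :
    yieldsRainbow (joinK1 G) c.joinK1Extend (some v) ↔ yieldsRainbow G c v := by
  refine ⟨fun h i => ?_, fun h i => Fin.lastCases ?_ (fun j => ?_) i⟩
  · obtain ⟨_ | w, hw, hcw⟩ := h i.castSucc
    · exact absurd hcw (Fin.castSucc_lt_last i).ne'
    · exact ⟨w, by simpa using hw, by simpa using hcw⟩
  · exact ⟨none, Or.inr (joinK1_adj_none_some v).symm, rfl⟩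
  · obtain ⟨w, hw, hcw⟩ := h j
    exact ⟨some w, by simpa using hw, by simp [hcw]⟩

theorem rainbowCount_joinK1Extend [Fintype V] {c : G.Coloring (Fin k)} (hc : Surjective c) :
    rainbowCount (joinK1 G) c.joinK1Extend = 1 + rainbowCount G c := by
  have hnone : yieldsRainbow (joinK1 G) c.joinK1Extend none :=
    yieldsRainbow_of_forall_adj (joinK1Extend_surjective hc) fun
      | none, h => absurd rfl h
      | some v, _ => joinK1_adj_none_some v
  rw [rainbowCount, Nat.card_subtype_option hnone]
  exact congrArg (1 + ·) <|
    Nat.card_congr (Equiv.subtypeEquivRight (yieldsRainbow_joinK1Extend_some c))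

end SimpleGraph.Coloring

open SimpleGraph.Coloring

theorem joinK1_coloring_surjective (hG : ∀ c : G.Coloring (Fin k), Surjective c)
    (d : (joinK1 G).Coloring (Fin (k + 1))) : Surjective d := by
  obtain ⟨e, c, h⟩ := exists_recolorOfEquiv_eq_joinK1Extend d
  have hcomp := joinK1Extend_surjective (hG c)
  rw [← h] at hcomp
  exact (EquivLike.comp_surjective d e).mp hcomp

theorem SimpleGraph.Colorable.joinK1 (hG : G.Colorable k) : (joinK1 G).Colorable (k + 1) :=
  let ⟨c⟩ := hG
  ⟨c.joinK1Extend⟩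

theorem chromaticNumber_joinK1 (hk : G.chromaticNumber = k) :
    (joinK1 G).chromaticNumber = (k + 1 : ℕ) := by
  have hGk : G.Colorable k := chromaticNumber_le_iff_colorable.mp hk.le
  exact (chromaticNumber_eq_iff_forall_surjective hGk.joinK1).mpr
    (joinK1_coloring_surjective ((chromaticNumber_eq_iff_forall_surjective hGk).mp hk))

theorem rMin_joinK1 [Fintype V] (hk : G.chromaticNumber = k) :
    rMin (joinK1 G) (k + 1) = 1 + rMin G k := by
  have hGk : G.Colorable k := chromaticNumber_le_iff_colorable.mp hk.le
  have hG := (chromaticNumber_eq_iff_forall_surjective hGk).mp hk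
  have hrange : Set.range (fun d : (joinK1 G).Coloring (Fin (k + 1)) => rainbowCount _ d) =
      (1 + ·) '' Set.range fun c : G.Coloring (Fin k) => rainbowCount G c := by
    rw [← Set.range_comp]
    ext n
    constructor
    · rintro ⟨d, rfl⟩
      obtain ⟨e, c, h⟩ := exists_recolorOfEquiv_eq_joinK1Extend d
      refine ⟨c, ?_⟩
      rw [comp_apply, ← rainbowCount_joinK1Extend (hG c), ← h, rainbowCount_recolorOfEquiv]
    · rintro ⟨c, rfl⟩
      exact ⟨c.joinK1Extend, rainbowCount_joinK1Extend (hG c)⟩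
  have hne : (Set.range fun c : G.Coloring (Fin k) => rainbowCount G c).Nonempty :=
    let ⟨c⟩ := hGk
    ⟨_, c, rfl⟩
  have hmono : Monotone (1 + · : ℕ → ℕ) := fun _ _ h => Nat.add_le_add_left h 1
  rw [rMin, rMin, hrange, ← Set.Finite.map_sInf_of_monotone hmono hne (Set.finite_range _)]

end JoinK1

/-- For `G' = K₁ + G` we have `χ(G') = χ(G) + 1` and
`r⁻_χ(G') = 1 + r⁻_χ(G)`. -/
theorem joinK1_chromatic_and_rMin {V : Type*} [Fintype V] (G : SimpleGraph V) (k : ℕ)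
    (hk : G.chromaticNumber = k) :
    (joinK1 G).chromaticNumber = (k + 1 : ℕ) ∧ rMin (joinK1 G) (k + 1) = 1 + rMin G k := by
  exact ⟨chromaticNumber_joinK1 hk, rMin_joinK1 hk⟩
end

section
/- For every odd integer n ≥ 3, the cycle graph C_n satisfies r^-_χ(C_n) = 3; that is, χ(C_n) = 3 and the minimum, over all proper 3-colourings c of C_n, of the number of vertices yielding a rainbow neighbourhood with respect to c equals 3. -/
/-!
Read the colours of a proper 3-colouring `c` of `C_n` in `ZMod 3` and let `s v = ±1` be the lift
of `c (v + 1) - c v`. Since `c (v + 1) - c (v - 1) = s (v - 1) + s v`, the vertex `v` is rainbow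
iff `s (v - 1) = s v`; summing `s (v - 1) + s v` over the cycle then gives
`∑ s = ∑_{v rainbow} s v`, so `|∑ s|` is at most the number of rainbow vertices. On the other hand
`∑ s` telescopes to `0` in `ZMod 3`, and it is odd because `n` is, so `|∑ s| ≥ 3`. The tricolouring
`0, 1, 0, 1, …, 1, 2` shows that three rainbow vertices can occur.
-/
open SimpleGraph

open Finset

theorem abs_sum_le_card_filter_apply_eq {α : Type*} [Fintype α]
    (σ : Equiv.Perm α) {s : α → ℤ} (hs : ∀ v, s v = 1 ∨ s v = -1) :
    |∑ v, s v| ≤ #{v | s (σ v) = s v} := by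
  have hpair : ∀ v, s (σ v) + s v = if s (σ v) = s v then 2 * s v else 0 := by
    intro v
    rcases hs v with h | h <;> rcases hs (σ v) with h' | h' <;> simp [h, h']
  have hsum : ∑ v, s v = ∑ v with s (σ v) = s v, s v := by
    have hdouble : 2 * ∑ v, s v = 2 * ∑ v with s (σ v) = s v, s v := by
      calc 2 * ∑ v, s v = ∑ v, (s (σ v) + s v) := by
            rw [sum_add_distrib, Equiv.sum_comp σ s]; ring
        _ = 2 * ∑ v with s (σ v) = s v, s v := by
            simp_rw [hpair, ← sum_filter, mul_sum]
    omega
  calc |∑ v, s v| ≤ ∑ v with s (σ v) = s v, |s v| := hsum ▸ abs_sum_le_sum_abs _ _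
    _ = #{v | s (σ v) = s v} := by
      rw [card_eq_sum_ones, Nat.cast_sum]
      refine sum_congr rfl fun v _ => ?_
      rcases hs v with h | h <;> simp [h]

theorem odd_sum_of_forall_eq_one_or_eq_neg_one {α : Type*} [Fintype α] {s : α → ℤ}
    (hs : ∀ v, s v = 1 ∨ s v = -1) (hα : Odd (Fintype.card α)) : Odd (∑ v, s v) := by
  have heven : Even (∑ v, (s v - 1)) :=
    even_sum _ fun v _ => by rcases hs v with h | h <;> simp [h]
  have hsplit : ∑ v, s v = ∑ v, (s v - 1) + Fintype.card α := by
    simp [sum_sub_distrib]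
  rw [hsplit]
  exact heven.add_odd (by exact_mod_cast hα)

theorem three_le_card_filter_apply_eq {α : Type*} [Fintype α]
    (σ : Equiv.Perm α) {s : α → ℤ} (hs : ∀ v, s v = 1 ∨ s v = -1)
    (hα : Odd (Fintype.card α)) (h3 : 3 ∣ ∑ v, s v) : 3 ≤ #{v | s (σ v) = s v} := by
  have hle := abs_sum_le_card_filter_apply_eq σ hs
  obtain ⟨k, hk⟩ := odd_sum_of_forall_eq_one_or_eq_neg_one hs hα
  obtain ⟨j, hj⟩ := h3
  rcases abs_cases (∑ v, s v) with ⟨habs, hsgn⟩ | ⟨habs, hsgn⟩ <;> omega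

theorem yieldsRainbow_iff_exists_adj_ne {V : Type*} {G : SimpleGraph V}
    (c : G.Coloring (Fin 3)) (v : V) :
    yieldsRainbow G c v ↔ ∃ a b, G.Adj v a ∧ G.Adj v b ∧ c a ≠ c b := by
  constructor
  · intro hv
    obtain ⟨i, j, hij, hi, hj⟩ := (by decide : ∀ x : Fin 3, ∃ i j, i ≠ j ∧ i ≠ x ∧ j ≠ x) (c v)
    obtain ⟨a, ha | ha, rfl⟩ := hv i
    · exact absurd (congrArg c ha) hi
    obtain ⟨b, hb | hb, rfl⟩ := hv j
    · exact absurd (congrArg c hb) hj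
    exact ⟨a, b, ha, hb, hij⟩
  · rintro ⟨a, b, ha, hb, hab⟩ i
    have hcover : ∀ i x y z : Fin 3, x ≠ y → x ≠ z → y ≠ z → i = x ∨ i = y ∨ i = z := by decide
    rcases hcover i (c v) (c a) (c b) (c.valid ha) (c.valid hb) hab with h | h | h
    · exact ⟨v, .inl rfl, h.symm⟩
    · exact ⟨a, .inr ha, h.symm⟩
    · exact ⟨b, .inr hb, h.symm⟩

theorem rainbowCount_eq_card_filter {V : Type*} [Fintype V] {k : ℕ} {G : SimpleGraph V}
    (c : G.Coloring (Fin k)) [DecidablePred (yieldsRainbow G c)] :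
    rainbowCount G c = #{v | yieldsRainbow G c v} := by
  rw [rainbowCount, Nat.card_eq_fintype_card, Fintype.card_subtype]

theorem rMin_eq_of_forall_le {V : Type*} [Fintype V] {G : SimpleGraph V} {k r : ℕ}
    (hle : ∀ c : G.Coloring (Fin k), r ≤ rainbowCount G c) (c₀ : G.Coloring (Fin k))
    (hc₀ : rainbowCount G c₀ ≤ r) : rMin G k = r :=
  le_antisymm ((Nat.sInf_le (Set.mem_range_self c₀)).trans hc₀)
    (le_csInf ⟨_, c₀, rfl⟩ (by rintro _ ⟨c, rfl⟩; exact hle c))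

namespace SimpleGraph.cycleGraph

variable {n : ℕ}

theorem adj_iff_eq_sub_one_or_eq_add_one {v u : Fin (n + 2)} :
    (cycleGraph (n + 2)).Adj v u ↔ u = v - 1 ∨ u = v + 1 := by
  rw [cycleGraph_adj, sub_eq_iff_eq_add', eq_sub_iff_add_eq, eq_comm, sub_eq_iff_eq_add', or_comm]

theorem yieldsRainbow_iff (c : (cycleGraph (n + 2)).Coloring (Fin 3)) (v : Fin (n + 2)) :
    yieldsRainbow (cycleGraph (n + 2)) c v ↔ c (v - 1) ≠ c (v + 1) := by
  simp only [yieldsRainbow_iff_exists_adj_ne, adj_iff_eq_sub_one_or_eq_add_one]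
  constructor
  · rintro ⟨a, b, rfl | rfl, rfl | rfl, hab⟩
    all_goals first | exact absurd rfl hab | exact hab | exact hab.symm
  · intro h
    exact ⟨_, _, .inl rfl, .inr rfl, h⟩

/-- `valMinAbs` lifts the nonzero difference of neighbouring colours to `±1`. -/
def step (c : (cycleGraph (n + 2)).Coloring (Fin 3)) (v : Fin (n + 2)) : ℤ :=
  (ZMod.finEquiv 3 (c (v + 1)) - ZMod.finEquiv 3 (c v)).valMinAbs

theorem intCast_step (c : (cycleGraph (n + 2)).Coloring (Fin 3)) (v : Fin (n + 2)) :
    (step c v : ZMod 3) = ZMod.finEquiv 3 (c (v + 1)) - ZMod.finEquiv 3 (c v) :=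
  ZMod.coe_valMinAbs _

theorem step_eq_one_or_eq_neg_one (c : (cycleGraph (n + 2)).Coloring (Fin 3)) (v : Fin (n + 2)) :
    step c v = 1 ∨ step c v = -1 := by
  have hne : ZMod.finEquiv 3 (c (v + 1)) - ZMod.finEquiv 3 (c v) ≠ 0 :=
    sub_ne_zero.2 <| (ZMod.finEquiv 3).injective.ne <|
      c.valid (adj_iff_eq_sub_one_or_eq_add_one.2 (.inr rfl)).symm
  exact (by decide : ∀ x : ZMod 3, x ≠ 0 → x.valMinAbs = 1 ∨ x.valMinAbs = -1) _ hne

theorem three_dvd_sum_step (c : (cycleGraph (n + 2)).Coloring (Fin 3)) :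
    3 ∣ ∑ v, step c v := by
  have hzero : ((∑ v, step c v : ℤ) : ZMod 3) = 0 := by
    simp only [Int.cast_sum, intCast_step, sum_sub_distrib, sub_eq_zero]
    exact Equiv.sum_comp (Equiv.addRight (1 : Fin (n + 2))) fun v => ZMod.finEquiv 3 (c v)
  exact_mod_cast (ZMod.intCast_zmod_eq_zero_iff_dvd _ 3).1 hzero

theorem yieldsRainbow_iff_step_eq (c : (cycleGraph (n + 2)).Coloring (Fin 3)) (v : Fin (n + 2)) :
    yieldsRainbow (cycleGraph (n + 2)) c v ↔ step c (v - 1) = step c v := by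
  have hsum : ZMod.finEquiv 3 (c (v + 1)) - ZMod.finEquiv 3 (c (v - 1)) =
      ((step c (v - 1) + step c v : ℤ) : ZMod 3) := by
    rw [Int.cast_add, intCast_step, intCast_step, sub_add_cancel]; ring
  rw [yieldsRainbow_iff, ← (ZMod.finEquiv 3).injective.ne_iff, ne_comm, ← sub_ne_zero, hsum]
  rcases step_eq_one_or_eq_neg_one c (v - 1) with h | h <;>
    rcases step_eq_one_or_eq_neg_one c v with h' | h' <;> rw [h, h'] <;> decide

theorem three_le_rainbowCount (hodd : Odd (n + 2)) (c : (cycleGraph (n + 2)).Coloring (Fin 3)) :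
    3 ≤ rainbowCount (cycleGraph (n + 2)) c := by
  classical
  have hcount : rainbowCount (cycleGraph (n + 2)) c =
      #{v | step c (Equiv.subRight 1 v) = step c v} := by
    rw [rainbowCount_eq_card_filter]
    exact congrArg card (filter_congr fun v _ => yieldsRainbow_iff_step_eq c v)
  rw [hcount]
  exact three_le_card_filter_apply_eq _ (step_eq_one_or_eq_neg_one c) (by simpa using hodd)
    (three_dvd_sum_step c)

theorem yieldsRainbow_tricoloring {v : Fin (n + 2)}
    (hv : yieldsRainbow (cycleGraph (n + 2)) (tricoloring (n + 2) (Nat.le_add_left 2 n)) v) :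
    v.val = 0 ∨ v.val = n ∨ v.val = n + 1 := by
  rw [yieldsRainbow_iff] at hv
  by_contra! hmid
  have hsub : (v - 1).val = v.val - 1 := by
    rw [Fin.coe_sub_one, if_neg (fun h => hmid.1 (by simp [h]))]
  have hadd : (v + 1).val = v.val + 1 := by
    rw [Fin.val_add_one, if_neg (fun h => hmid.2.2 (by simp [h]))]
  apply hv
  change (if (v - 1).val = n + 2 - 1 then 2 else _) = (if (v + 1).val = n + 2 - 1 then 2 else _)
  rw [if_neg (by omega), if_neg (by omega), Fin.mk.injEq, hsub, hadd]
  omega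

theorem rainbowCount_tricoloring_le :
    rainbowCount (cycleGraph (n + 2)) (tricoloring (n + 2) (Nat.le_add_left 2 n)) ≤ 3 := by
  classical
  rw [rainbowCount_eq_card_filter]
  calc _ ≤ #({0, n, n + 1} : Finset ℕ) :=
        card_le_card_of_injOn Fin.val (fun v hv => by
          simpa using yieldsRainbow_tricoloring (mem_filter.1 hv).2) Fin.val_injective.injOn
    _ ≤ 3 := card_le_three

end SimpleGraph.cycleGraph

/-- For every odd `n ≥ 3`, the cycle `C_n` has `χ(C_n) = 3` and the
minimum rainbow neighbourhood number `r⁻_χ(C_n) = 3`. -/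
theorem rMin_cycle_odd (n : ℕ) (hn : 3 ≤ n) (hodd : Odd n) :
    (SimpleGraph.cycleGraph n).chromaticNumber = 3 ∧
      rMin (SimpleGraph.cycleGraph n) 3 = 3 := by
  refine ⟨chromaticNumber_cycleGraph_of_odd n (by omega) hodd, ?_⟩
  obtain ⟨n, rfl⟩ : ∃ m, n = m + 2 := ⟨n - 2, by omega⟩
  exact rMin_eq_of_forall_le (cycleGraph.three_le_rainbowCount hodd) _
    cycleGraph.rainbowCount_tricoloring_le
end

section
/- For every natural number ℓ ≥ 0, the sunlet graph S_n with n = 7 + 4ℓ satisfies r^+_χ(S_n) = n; that is, χ(S_n) = 3 and the maximum, over all proper 3-colourings c of S_n, of the number of vertices yielding a rainbow neighbourhood with respect to c equals n (exactly the n cycle vertices can be made to yield, and no pendant vertex can yield). -/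
open SimpleGraph

/-- The sunlet graph `S_n` on `2n` vertices: `Sum.inl i` are the cycle vertices
(adjacent as in `C_n`), and `Sum.inr i` is the pendant vertex attached to `Sum.inl i`. -/
def sunletGraph (n : ℕ) : SimpleGraph (Fin n ⊕ Fin n) where
  Adj x y :=
    match x, y with
    | Sum.inl i, Sum.inl j => (SimpleGraph.cycleGraph n).Adj i j
    | Sum.inl i, Sum.inr j => i = j
    | Sum.inr i, Sum.inl j => i = j
    | Sum.inr _, Sum.inr _ => False
  symm := by
    constructor
    rintro (i | i) (j | j) h <;> simp_all
    all_goals exact (SimpleGraph.cycleGraph n).adj_symm h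
  loopless := by
    constructor
    rintro (i | i) h <;> simp_all

/-!
A pendant vertex is never rainbow for three colours: its closed neighbourhood has only two
vertices. Conversely, take any proper 3-colouring of the cycle `C_n` and give the pendant `u_i`
the third colour, the one missing from `v_i` and `v_{i+1}`; then each `v_i` sees all three
colours on `v_i`, `v_{i+1}`, `u_i`, so exactly the `n` cycle vertices are rainbow. For odd `n`,
`χ(C_n) = 3` and `C_n` is a subgraph of `S_n`, whence `χ(S_n) = 3`.
-/

lemma rainbowCount_eq_ncard {V : Type*} [Fintype V] {k : ℕ} (G : SimpleGraph V)
    (c : G.Coloring (Fin k)) : rainbowCount G c = {v | yieldsRainbow G c v}.ncard :=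
  rfl

lemma rMax_eq_of_rainbowCount_le {V : Type*} [Fintype V] {G : SimpleGraph V} {k m : ℕ}
    (hle : ∀ c : G.Coloring (Fin k), rainbowCount G c ≤ m) (c₀ : G.Coloring (Fin k))
    (hc₀ : rainbowCount G c₀ = m) : rMax G k = m :=
  IsGreatest.csSup_eq ⟨⟨c₀, hc₀⟩, by rintro _ ⟨c, rfl⟩; exact hle c⟩

lemma fin_three_neg_add_ne_left : ∀ {a b : Fin 3}, a ≠ b → -(a + b) ≠ a := by decide

lemma fin_three_eq_or_eq_or_eq_neg_add :
    ∀ {a b : Fin 3}, a ≠ b → ∀ t, t = a ∨ t = b ∨ t = -(a + b) := by decide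

namespace SimpleGraph

variable {n : ℕ}

lemma cycleGraph_adj_add_one (i : Fin (n + 2)) : (cycleGraph (n + 2)).Adj i (i + 1) :=
  cycleGraph_adj.2 (Or.inr (add_sub_cancel_left i 1))

def sunletGraph.cycleHom : cycleGraph n →g sunletGraph n := ⟨Sum.inl, id⟩

lemma sunletGraph_closedNbhd_inr {j : Fin n} {u : Fin n ⊕ Fin n} :
    u = .inr j ∨ (sunletGraph n).Adj (.inr j) u ↔ u = .inr j ∨ u = .inl j := by
  rcases u with i | i <;> simp [sunletGraph, eq_comm]

lemma not_yieldsRainbow_sunletGraph_inr {k : ℕ} (hk : 3 ≤ k)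
    (c : (sunletGraph n).Coloring (Fin k)) (j : Fin n) :
    ¬ yieldsRainbow (sunletGraph n) c (.inr j) := by
  obtain ⟨t, -, ht⟩ := Finset.exists_mem_notMem_of_card_lt_card
    (s := {c (.inr j), c (.inl j)}) (t := Finset.univ)
    (by simpa using Finset.card_le_two.trans_lt (by omega : 2 < k))
  intro hrainbow
  obtain ⟨u, hu, rfl⟩ := hrainbow t
  rcases sunletGraph_closedNbhd_inr.1 hu with rfl | rfl <;> simp at ht

lemma rainbowCount_sunletGraph_le {k : ℕ} (hk : 3 ≤ k) (c : (sunletGraph n).Coloring (Fin k)) :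
    rainbowCount (sunletGraph n) c ≤ n := by
  have hsub : {v | yieldsRainbow (sunletGraph n) c v} ⊆ Set.range Sum.inl := by
    rintro (i | j) hv
    · exact ⟨i, rfl⟩
    · exact absurd hv (not_yieldsRainbow_sunletGraph_inr hk c j)
  calc rainbowCount (sunletGraph n) c
      = {v | yieldsRainbow (sunletGraph n) c v}.ncard := rainbowCount_eq_ncard _ c
    _ ≤ (Set.range (Sum.inl : Fin n → Fin n ⊕ Fin n)).ncard := Set.ncard_le_ncard hsub
    _ = n := by simp [Set.ncard_range_of_injective Sum.inl_injective]

/-- The pendant at `i` gets the colour missing from `c i` and `c (i + 1)`, which in `Fin 3` is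
`-(c i + c (i + 1))`. -/
def Coloring.sunletOfCycle (c : (cycleGraph (n + 2)).Coloring (Fin 3)) :
    (sunletGraph (n + 2)).Coloring (Fin 3) :=
  Coloring.mk (Sum.elim c fun i => -(c i + c (i + 1))) <| by
    have hne (i) := fin_three_neg_add_ne_left (c.valid (cycleGraph_adj_add_one i))
    rintro (i | i) (j | j) h
    · exact c.valid h
    · obtain rfl : i = j := h
      exact (hne i).symm
    · obtain rfl : i = j := h
      exact hne i
    · exact h.elim

lemma yieldsRainbow_sunletOfCycle_inl (c : (cycleGraph (n + 2)).Coloring (Fin 3))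
    (i : Fin (n + 2)) : yieldsRainbow (sunletGraph (n + 2)) c.sunletOfCycle (.inl i) := by
  intro t
  rcases fin_three_eq_or_eq_or_eq_neg_add (c.valid (cycleGraph_adj_add_one i)) t
    with rfl | rfl | rfl
  · exact ⟨.inl i, .inl rfl, rfl⟩
  · exact ⟨.inl (i + 1), .inr (cycleGraph_adj_add_one i), rfl⟩
  · exact ⟨.inr i, .inr rfl, rfl⟩

lemma rainbowCount_sunletOfCycle (c : (cycleGraph (n + 2)).Coloring (Fin 3)) :
    rainbowCount (sunletGraph (n + 2)) c.sunletOfCycle = n + 2 := by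
  have hset : {v | yieldsRainbow (sunletGraph (n + 2)) c.sunletOfCycle v} = Set.range Sum.inl := by
    ext (i | j)
    · simpa using yieldsRainbow_sunletOfCycle_inl c i
    · simpa using not_yieldsRainbow_sunletGraph_inr le_rfl c.sunletOfCycle j
  rw [rainbowCount_eq_ncard, hset, Set.ncard_range_of_injective Sum.inl_injective,
    Nat.card_eq_fintype_card, Fintype.card_fin]

lemma rMax_sunletGraph : rMax (sunletGraph (n + 2)) 3 = n + 2 :=
  rMax_eq_of_rainbowCount_le (rainbowCount_sunletGraph_le le_rfl)
    (cycleGraph.tricoloring (n + 2) le_add_self).sunletOfCycle (rainbowCount_sunletOfCycle _)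

lemma chromaticNumber_sunletGraph_of_odd (hodd : Odd (n + 2)) :
    (sunletGraph (n + 2)).chromaticNumber = 3 :=
  le_antisymm
    (cycleGraph.tricoloring (n + 2) le_add_self).sunletOfCycle.colorable.chromaticNumber_le
    (chromaticNumber_cycleGraph_of_odd _ le_add_self hodd ▸
      chromaticNumber_mono_of_hom sunletGraph.cycleHom)

end SimpleGraph

/-- For `n = 7 + 4ℓ`, the sunlet graph `S_n` has `χ = 3` and
`r⁺_χ(S_n) = n`: some proper 3-colouring makes all `n` cycle vertices yield rainbow
neighbourhoods, while no pendant vertex ever yields one. -/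
theorem rMax_sunlet_seven_plus (ℓ : ℕ) :
    (sunletGraph (7 + 4 * ℓ)).chromaticNumber = 3 ∧
      rMax (sunletGraph (7 + 4 * ℓ)) 3 = 7 + 4 * ℓ ∧
      (∃ c : (sunletGraph (7 + 4 * ℓ)).Coloring (Fin 3),
        ∀ i : Fin (7 + 4 * ℓ), yieldsRainbow (sunletGraph (7 + 4 * ℓ)) c (Sum.inl i)) ∧
      (∀ c : (sunletGraph (7 + 4 * ℓ)).Coloring (Fin 3),
        ∀ j : Fin (7 + 4 * ℓ), ¬ yieldsRainbow (sunletGraph (7 + 4 * ℓ)) c (Sum.inr j)) := by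
  obtain ⟨m, hm⟩ : ∃ m, 7 + 4 * ℓ = m + 2 := ⟨5 + 4 * ℓ, by omega⟩
  have hodd : Odd (m + 2) := ⟨2 * ℓ + 3, by omega⟩
  rw [hm]
  exact ⟨chromaticNumber_sunletGraph_of_odd hodd, rMax_sunletGraph,
    ⟨_, yieldsRainbow_sunletOfCycle_inl (cycleGraph.tricoloring (m + 2) le_add_self)⟩,
    not_yieldsRainbow_sunletGraph_inr le_rfl⟩
end

section
/- For any finite simple graph G, the clique number of G is at most the minimum rainbow neighbourhood number: ω(G) ≤ r^-_χ(G). Equivalently, for every proper colouring c of G using exactly χ(G) colours, the number of vertices yielding a rainbow neighbourhood with respect to c is at least ω(G). -/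
open SimpleGraph

/-!
In a colouring with `χ(G)` colours every colour class contains a rainbow vertex: otherwise each
vertex of that class can be recoloured with a colour missing from its closed neighbourhood, which
gives a proper colouring with `χ(G) - 1` colours. Distinct classes give distinct rainbow vertices,
so there are at least `χ(G) ≥ ω(G)` of them.
-/

namespace SimpleGraph.Coloring

variable {V : Type*} {G : SimpleGraph V} {k : ℕ}

theorem colorable_sub_one_of_forall_not_yieldsRainbow (c : G.Coloring (Fin k)) (i : Fin k)
    (h : ∀ v, c v = i → ¬ yieldsRainbow G c v) : G.Colorable (k - 1) := by
  classical
  have hmissing : ∀ v, c v = i → ∃ j, ∀ u, (u = v ∨ G.Adj v u) → c u ≠ j := by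
    simpa [yieldsRainbow] using h
  choose missing hmissing using hmissing
  let recolor (v : V) : Fin k := if hv : c v = i then missing v hv else c v
  have recolor_ne (v : V) : recolor v ≠ i := by
    by_cases hv : c v = i
    · simpa [recolor, hv] using (hmissing v hv v (.inl rfl)).symm
    · simp [recolor, hv]
  have recolor_valid {u v : V} (huv : G.Adj u v) : recolor u ≠ recolor v := by
    by_cases hu : c u = i <;> by_cases hv : c v = i
    · exact absurd (hu.trans hv.symm) (c.valid huv)
    · simpa [recolor, hu, hv] using (hmissing u hu v (.inr huv)).symm
    · simpa [recolor, hu, hv] using hmissing v hv u (.inr huv.symm)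
    · simpa [recolor, hu, hv] using c.valid huv
  have hcard : Fintype.card {j : Fin k // j ≠ i} = k - 1 := by simp
  exact hcard ▸ (Coloring.mk (fun v => (⟨recolor v, recolor_ne v⟩ : {j : Fin k // j ≠ i}))
    fun huv => by simpa using recolor_valid huv).colorable

theorem exists_yieldsRainbow_of_chromaticNumber_eq (hk : G.chromaticNumber = k)
    (c : G.Coloring (Fin k)) (i : Fin k) : ∃ v, c v = i ∧ yieldsRainbow G c v := by
  by_contra! h
  have hle := (c.colorable_sub_one_of_forall_not_yieldsRainbow i h).chromaticNumber_le
  rw [hk, Nat.cast_le] at hle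
  have := i.pos
  omega

theorem le_rainbowCount [Fintype V] (hk : G.chromaticNumber = k) (c : G.Coloring (Fin k)) :
    k ≤ rainbowCount G c := by
  choose v hv_color hv_rainbow using c.exists_yieldsRainbow_of_chromaticNumber_eq hk
  have hinj : Function.Injective fun i => (⟨v i, hv_rainbow i⟩ : {v // yieldsRainbow G c v}) :=
    fun i j hij => (hv_color i).symm.trans <| (congrArg (c ·.1) hij).trans (hv_color j)
  simpa [rainbowCount] using Nat.card_le_card_of_injective _ hinj

end SimpleGraph.Coloring

/-- The clique number is at most the minimum rainbow neighbourhood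
number: `ω(G) ≤ r⁻_χ(G)`; equivalently, every proper colouring with exactly `χ(G)`
colours has at least `ω(G)` vertices yielding rainbow neighbourhoods. -/
theorem cliqueNum_le_rMin {V : Type*} [Fintype V] (G : SimpleGraph V) (k : ℕ)
    (hk : G.chromaticNumber = k) :
    G.cliqueNum ≤ rMin G k ∧
      ∀ c : G.Coloring (Fin k), G.cliqueNum ≤ rainbowCount G c := by
  have hω : G.cliqueNum ≤ k := by
    have := hk ▸ G.cliqueNum_le_chromaticNumber
    exact_mod_cast this
  have hcount (c : G.Coloring (Fin k)) : G.cliqueNum ≤ rainbowCount G c :=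
    hω.trans (c.le_rainbowCount hk)
  obtain ⟨c⟩ : G.Colorable k := chromaticNumber_le_iff_colorable.mp hk.le
  exact ⟨le_csInf ⟨_, c, rfl⟩ (by rintro _ ⟨c', rfl⟩; exact hcount c'), hcount⟩
end

section
/- Let H be a finite simple graph with χ(H) = k + 1 and let c be a proper colouring of H using exactly k + 1 colours. Let H' be the induced subgraph of H on the set of vertices not receiving the (k+1)-st colour, with the colouring c restricted to H' (a proper colouring of H' using exactly k colours). Then every vertex of H' that yields a rainbow neighbourhood in H with respect to c also yields a rainbow neighbourhood in H' with respect to the restricted colouring. -/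
open SimpleGraph

/-- The colouring of the induced subgraph on the vertices not coloured with the last
colour, obtained by restricting `c` (with colours renumbered into `Fin k`). -/
def restrictedColoring {W : Type*} (H : SimpleGraph W) {k : ℕ}
    (c : H.Coloring (Fin (k + 1))) :
    (H.induce {v : W | c v ≠ Fin.last k}).Coloring (Fin k) :=
  SimpleGraph.Coloring.mk (fun u => (c u.val).castPred u.prop) (by
    intro a b hab hEq
    exact c.valid hab (Fin.ext (by simpa [Fin.ext_iff] using hEq)))

/-- If `χ(H) = k + 1` and `c` is a proper colouring of `H` using
exactly `k + 1` colours, then every vertex of the induced subgraph `H'` (on the vertices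
not receiving the `(k+1)`-st colour) that yields a rainbow neighbourhood in `H` w.r.t.
`c` also yields a rainbow neighbourhood in `H'` w.r.t. the restricted colouring. -/
theorem yieldsRainbow_restrict {W : Type*} [Fintype W] (H : SimpleGraph W) (k : ℕ)
    (hk : H.chromaticNumber = (k + 1 : ℕ)) (c : H.Coloring (Fin (k + 1)))
    (hsurj : Function.Surjective c) (v : {v : W | c v ≠ Fin.last k})
    (hv : yieldsRainbow H c v.val) :
    yieldsRainbow (H.induce {v : W | c v ≠ Fin.last k}) (restrictedColoring H c) v := by
  intro i
  obtain ⟨u, hadj, hcu⟩ := hv i.castSucc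
  have hu : u ∈ {v : W | c v ≠ Fin.last k} := by
    simp only [Set.mem_setOf_eq, hcu]
    exact fun h => (Fin.castSucc_lt_last i).ne h
  refine ⟨⟨u, hu⟩, ?_, ?_⟩
  · rcases hadj with h | h
    · left; exact Subtype.ext h
    · right; exact h
  · show (c u).castPred hu = i
    simp [Fin.ext_iff, hcu]
end
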